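/- arXiv:2403.01812 — 3 statements merged into one kernel-verified Lean document; each statement's English description precedes it below -/
import Mathlib

section
/- For the Carreau-type law with μ₀ > 0, λ > 0 and power index n ∈ (0, 1], the function P(ε̇) = μ₀ (1 + (λ ε̇)²)^((n−1)/2) · ε̇ is strictly monotone increasing on ℝ. -/
/-- For the Carreau-type law with `μ₀ > 0`, `λ > 0`, `n ∈ (0,1]`, the function
`P(ε̇) = μ₀ (1 + (λ ε̇)²)^((n−1)/2) ε̇` is strictly monotone increasing on `ℝ`. -/
theorem carreau_strictMono
    (μ₀ lam n : ℝ) (hμ₀ : 0 < μ₀) (hlam : 0 < lam) (hn0 : 0 < n) (hn1 : n ≤ 1) :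
    StrictMono (fun x : ℝ => μ₀ * (1 + (lam * x) ^ 2) ^ ((n - 1) / 2) * x) := by
  set g : ℝ → ℝ := fun x => (1 + (lam * x) ^ 2) ^ ((n - 1) / 2) * x with hg
  have hbase : ∀ t : ℝ, (0:ℝ) < 1 + (lam * t) ^ 2 := fun t => by positivity
  -- key lemma on nonnegative reals
  have key : ∀ x y : ℝ, 0 ≤ x → x < y → g x < g y := by
    intro x y hx hxy
    have hy : 0 < y := lt_of_le_of_lt hx hxy
    have huv : (lam * x) ^ 2 < (lam * y) ^ 2 := by
      have h1 : lam * x < lam * y := by nlinarith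
      have h2 : 0 ≤ lam * x := by positivity
      exact pow_lt_pow_left₀ h1 h2 (by norm_num)
    set u := (lam * x) ^ 2 with hu_def
    set v := (lam * y) ^ 2 with hv_def
    have hu : 0 ≤ u := sq_nonneg _
    have h1u : (0:ℝ) < 1 + u := by linarith
    have h1v : (0:ℝ) < 1 + v := by linarith
    -- step 1 : (1+u)^(n-1) * u < (1+v)^(n-1) * v
    have ha : (1 + u) ^ n ≤ (1 + v) ^ n :=
      Real.rpow_le_rpow h1u.le (by linarith) hn0.le
    have hb : u / (1 + u) < v / (1 + v) := by
      rw [div_lt_div_iff₀ h1u h1v]; nlinarith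
    have hprod : (1 + u) ^ n * (u / (1 + u)) < (1 + v) ^ n * (v / (1 + v)) :=
      mul_lt_mul' ha hb (by positivity) (Real.rpow_pos_of_pos h1v n)
    have eu : (1 + u) ^ n * (u / (1 + u)) = (1 + u) ^ (n - 1) * u := by
      have : (1 + u) ^ n = (1 + u) ^ (n - 1) * (1 + u) := by
        rw [← Real.rpow_add_one h1u.ne']; ring_nf
      rw [this]; field_simp
    have ev : (1 + v) ^ n * (v / (1 + v)) = (1 + v) ^ (n - 1) * v := by
      have : (1 + v) ^ n = (1 + v) ^ (n - 1) * (1 + v) := by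
        rw [← Real.rpow_add_one h1v.ne']; ring_nf
      rw [this]; field_simp
    rw [eu, ev] at hprod
    -- step 2 : compare the squares of g x and g y
    have hsqx : (g x) ^ 2 = (1 + u) ^ (n - 1) * x ^ 2 := by
      rw [hg]
      simp only []
      rw [mul_pow, ← Real.rpow_natCast ((1 + (lam * x) ^ 2) ^ ((n - 1) / 2)) 2,
        ← Real.rpow_mul (hbase x).le]
      norm_num
      exact Or.inl rfl
    have hsqy : (g y) ^ 2 = (1 + v) ^ (n - 1) * y ^ 2 := by
      rw [hg]
      simp only []
      rw [mul_pow, ← Real.rpow_natCast ((1 + (lam * y) ^ 2) ^ ((n - 1) / 2)) 2,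
        ← Real.rpow_mul (hbase y).le]
      norm_num
      exact Or.inl rfl
    have hsq : (g x) ^ 2 < (g y) ^ 2 := by
      rw [hsqx, hsqy]
      have hxu : u = lam ^ 2 * x ^ 2 := by rw [hu_def]; ring
      have hyv : v = lam ^ 2 * y ^ 2 := by rw [hv_def]; ring
      have hl2 : (0:ℝ) < lam ^ 2 := by positivity
      have hA : (0:ℝ) < (1 + u) ^ (n - 1) := Real.rpow_pos_of_pos h1u _
      have hB : (0:ℝ) < (1 + v) ^ (n - 1) := Real.rpow_pos_of_pos h1v _
      rw [hxu] at hprod hA ⊢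
      rw [hyv] at hprod hB ⊢
      nlinarith [hprod, hA, hB, hl2]
    have hgy : 0 ≤ g y := by
      rw [hg]; positivity
    exact lt_of_pow_lt_pow_left₀ 2 hgy hsq
  -- oddness of g
  have hodd : ∀ x : ℝ, g (-x) = - g x := by
    intro x
    rw [hg]
    simp only [mul_neg, neg_sq, mul_comm]
    ring
  have hg0 : g 0 = 0 := by rw [hg]; simp
  -- conclude
  intro x y hxy
  simp only []
  have hG : g x < g y := by
    rcases le_or_gt 0 x with hx | hx
    · exact key x y hx hxy
    · rcases le_or_gt y 0 with hy | hy
      · have := key (-y) (-x) (by linarith) (by linarith)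
        rw [hodd, hodd] at this
        linarith
      · have h1 : g x < 0 := by
          have := key 0 (-x) le_rfl (by linarith)
          rw [hodd, hg0] at this
          linarith
        have h2 : 0 < g y := by
          have := key 0 y le_rfl hy
          rw [hg0] at this
          linarith
        linarith
  calc μ₀ * (1 + (lam * x) ^ 2) ^ ((n - 1) / 2) * x = μ₀ * g x := by rw [hg]; ring
    _ < μ₀ * g y := by exact (mul_lt_mul_iff_right₀ hμ₀).mpr hG
    _ = μ₀ * (1 + (lam * y) ^ 2) ^ ((n - 1) / 2) * y := by rw [hg]; ring
end

section
/- For the Carreau-type law with μ₀ > 0, λ > 0 and n ∈ (0,1], the derivative of P(ε̇) = μ_e(ε̇)·ε̇ is strictly positive everywhere; in particular the denominator μ_e(ε̇) + ε̇ ∂_ε̇ μ_e(ε̇) appearing in the strain-rate ODE is positive for all ε̇ ∈ ℝ. -/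
private lemma carreau_hasDerivAt (μ₀ lam p : ℝ) (ε : ℝ) :
    HasDerivAt (fun x : ℝ => μ₀ * (1 + (lam * x) ^ 2) ^ p)
      (μ₀ * (p * (1 + (lam * ε) ^ 2) ^ (p - 1) * (2 * (lam * ε) * lam))) ε := by
  have hA : (0:ℝ) < 1 + (lam * ε) ^ 2 := by positivity
  have h1 : HasDerivAt (fun x : ℝ => 1 + (lam * x) ^ 2) (2 * (lam * ε) * lam) ε := by
    have := (((hasDerivAt_id ε).const_mul lam).pow 2).const_add 1
    simpa [mul_comm, mul_assoc, mul_left_comm] using this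
  have h2 := h1.rpow_const (p := p) (Or.inl (ne_of_gt hA))
  have h3 := h2.const_mul μ₀
  refine h3.congr_deriv ?_
  ring

/-- For the Carreau-type law with `μ₀ > 0`, `λ > 0`, `n ∈ (0,1]`, the derivative of
`P(ε̇) = μ_e(ε̇) ε̇` is strictly positive everywhere; in particular the denominator
`μ_e(ε̇) + ε̇ ∂_ε̇ μ_e(ε̇)` in the strain-rate ODE is positive for all `ε̇`. -/
theorem carreau_denominator_pos
    (μ₀ lam n : ℝ) (hμ₀ : 0 < μ₀) (hlam : 0 < lam) (hn0 : 0 < n) (hn1 : n ≤ 1) :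
    ∀ ε : ℝ,
      (0 < deriv (fun x : ℝ => (μ₀ * (1 + (lam * x) ^ 2) ^ ((n - 1) / 2)) * x) ε) ∧
      (μ₀ * (1 + (lam * ε) ^ 2) ^ ((n - 1) / 2)) +
          ε * deriv (fun x : ℝ => μ₀ * (1 + (lam * x) ^ 2) ^ ((n - 1) / 2)) ε =
        deriv (fun x : ℝ => (μ₀ * (1 + (lam * x) ^ 2) ^ ((n - 1) / 2)) * x) ε := by
  intro ε
  set p : ℝ := (n - 1) / 2 with hp
  have hA : (0:ℝ) < 1 + (lam * ε) ^ 2 := by positivity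
  have hg := carreau_hasDerivAt μ₀ lam p ε
  have hP : HasDerivAt (fun x : ℝ => (μ₀ * (1 + (lam * x) ^ 2) ^ p) * x)
      ((μ₀ * (p * (1 + (lam * ε) ^ 2) ^ (p - 1) * (2 * (lam * ε) * lam))) * ε
        + (μ₀ * (1 + (lam * ε) ^ 2) ^ p) * 1) ε := hg.mul (hasDerivAt_id ε)
  have hdP := hP.deriv
  have hdg := hg.deriv
  constructor
  · rw [hdP]
    have hApow : (1 + (lam * ε) ^ 2) ^ p
        = (1 + (lam * ε) ^ 2) ^ (p - 1) * (1 + (lam * ε) ^ 2) := by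
      rw [← Real.rpow_add_one (ne_of_gt hA)]
      ring_nf
    have key : (μ₀ * (p * (1 + (lam * ε) ^ 2) ^ (p - 1) * (2 * (lam * ε) * lam))) * ε
        + (μ₀ * (1 + (lam * ε) ^ 2) ^ p) * 1
        = μ₀ * (1 + (lam * ε) ^ 2) ^ (p - 1) * (1 + n * (lam * ε) ^ 2) := by
      rw [hApow, hp]; ring
    rw [key]
    have : 0 < 1 + n * (lam * ε) ^ 2 := by positivity
    have := Real.rpow_pos_of_pos hA (p - 1)
    positivity
  · rw [hdP, hdg]; ring
end

section
/- For the Carreau-type law with n ∈ (0,1], μ₀ > 0, λ > 0, the function P(ε̇) = μ₀ (1 + (λ ε̇)²)^((n−1)/2) · ε̇ is a bijection from ℝ onto ℝ when n > 0, since it is continuous, strictly increasing, and satisfies P(ε̇) → ±∞ as ε̇ → ±∞. -/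
/-- For the Carreau-type law with `n ∈ (0,1]`, `μ₀ > 0`, `λ > 0`, the function
`P(ε̇) = μ₀ (1 + (λ ε̇)²)^((n−1)/2) ε̇` is continuous, strictly increasing, tends to `±∞`
as `ε̇ → ±∞`, and is a bijection from `ℝ` onto `ℝ`. -/
theorem carreau_bijective
    (μ₀ lam n : ℝ) (hμ₀ : 0 < μ₀) (hlam : 0 < lam) (hn0 : 0 < n) (hn1 : n ≤ 1) :
    Continuous (fun x : ℝ => μ₀ * (1 + (lam * x) ^ 2) ^ ((n - 1) / 2) * x) ∧
    StrictMono (fun x : ℝ => μ₀ * (1 + (lam * x) ^ 2) ^ ((n - 1) / 2) * x) ∧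
    Filter.Tendsto (fun x : ℝ => μ₀ * (1 + (lam * x) ^ 2) ^ ((n - 1) / 2) * x)
      Filter.atTop Filter.atTop ∧
    Filter.Tendsto (fun x : ℝ => μ₀ * (1 + (lam * x) ^ 2) ^ ((n - 1) / 2) * x)
      Filter.atBot Filter.atBot ∧
    Function.Bijective (fun x : ℝ => μ₀ * (1 + (lam * x) ^ 2) ^ ((n - 1) / 2) * x) := by
  set f : ℝ → ℝ := fun x : ℝ => μ₀ * (1 + (lam * x) ^ 2) ^ ((n - 1) / 2) * x with hf
  have hu : ∀ x : ℝ, (0:ℝ) < 1 + (lam * x) ^ 2 := fun x => by positivity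
  -- continuity
  have hcont : Continuous f := by
    apply Continuous.mul _ continuous_id
    apply Continuous.mul continuous_const
    apply Continuous.rpow_const
    · continuity
    · intro x; exact Or.inl (ne_of_gt (hu x))
  -- derivative
  have hderiv : ∀ x : ℝ, HasDerivAt f
      (μ₀ * ((2 * lam ^ 2 * x * ((n - 1) / 2) * (1 + (lam * x) ^ 2) ^ ((n - 1) / 2 - 1)) * x
        + (1 + (lam * x) ^ 2) ^ ((n - 1) / 2) * 1)) x := by
    intro x
    have h1 : HasDerivAt (fun y : ℝ => 1 + (lam * y) ^ 2) (2 * lam ^ 2 * x) x := by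
      have h2 := (((hasDerivAt_id x).const_mul lam).pow 2).const_add 1
      simp only [id_eq] at h2
      refine h2.congr_deriv ?_
      norm_num
      ring
    have h3 : HasDerivAt (fun y : ℝ => (1 + (lam * y) ^ 2) ^ ((n - 1) / 2))
        ((2 * lam ^ 2 * x) * ((n - 1) / 2) * (1 + (lam * x) ^ 2) ^ ((n - 1) / 2 - 1)) x :=
      h1.rpow_const (Or.inl (ne_of_gt (hu x)))
    have h4 := (h3.mul (hasDerivAt_id x)).const_mul μ₀
    simp only [id_eq] at h4
    refine (h4.congr_deriv ?_).congr_of_eventuallyEq (Filter.Eventually.of_forall fun y => ?_)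
    · ring
    · simp only [hf, Pi.mul_apply, id_eq]; ring
  have hderivpos : ∀ x : ℝ, 0 < μ₀ * ((2 * lam ^ 2 * x * ((n - 1) / 2) *
      (1 + (lam * x) ^ 2) ^ ((n - 1) / 2 - 1)) * x
        + (1 + (lam * x) ^ 2) ^ ((n - 1) / 2) * 1) := by
    intro x
    have hA : (0:ℝ) < (1 + (lam * x) ^ 2) ^ ((n - 1) / 2 - 1) :=
      Real.rpow_pos_of_pos (hu x) _
    have hB : (1 + (lam * x) ^ 2) ^ ((n - 1) / 2) =
        (1 + (lam * x) ^ 2) ^ ((n - 1) / 2 - 1) * (1 + (lam * x) ^ 2) := by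
      rw [← Real.rpow_add_one (ne_of_gt (hu x))]; ring_nf
    rw [hB]
    have hx2 : (0:ℝ) ≤ (lam * x) ^ 2 := sq_nonneg _
    have heq : (2 * lam ^ 2 * x * ((n - 1) / 2) *
        (1 + (lam * x) ^ 2) ^ ((n - 1) / 2 - 1)) * x
        + (1 + (lam * x) ^ 2) ^ ((n - 1) / 2 - 1) * (1 + (lam * x) ^ 2) * 1
        = (1 + (lam * x) ^ 2) ^ ((n - 1) / 2 - 1) * (1 + n * (lam * x) ^ 2) := by
      ring
    rw [heq]
    have hpos : (0:ℝ) < 1 + n * (lam * x) ^ 2 := by nlinarith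
    positivity
  have hmono : StrictMono f := by
    apply strictMono_of_deriv_pos
    intro x
    rw [(hderiv x).deriv]
    exact hderivpos x
  -- tendsto atTop
  have htop : Filter.Tendsto f Filter.atTop Filter.atTop := by
    have hbound : ∀ x : ℝ, 1 ≤ x → μ₀ * (1 + lam) ^ (n - 1) * x ^ n ≤ f x := by
      intro x hx
      have hx0 : (0:ℝ) < x := lt_of_lt_of_le one_pos hx
      have hxx : (1:ℝ) ≤ x * x := one_le_mul_of_one_le_of_one_le hx hx
      have h1 : (1 + (lam * x) ^ 2) ≤ ((1 + lam) * x) ^ 2 := by nlinarith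
      have hbase : (0:ℝ) < (1 + lam) * x := by positivity
      have h3 : (((1 + lam) * x) ^ (2:ℕ)) ^ ((n - 1) / 2) ≤
          (1 + (lam * x) ^ 2) ^ ((n - 1) / 2) :=
        Real.rpow_le_rpow_of_nonpos (hu x) h1 (by linarith)
      rw [← Real.rpow_natCast ((1 + lam) * x) 2, ← Real.rpow_mul hbase.le] at h3
      have h4 : ((2:ℕ):ℝ) * ((n - 1) / 2) = n - 1 := by push_cast; ring
      rw [h4] at h3
      have h5 : ((1 + lam) * x) ^ (n - 1) = (1 + lam) ^ (n - 1) * x ^ (n - 1) :=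
        Real.mul_rpow (by linarith) (le_of_lt hx0)
      rw [h5] at h3
      have h6 : x ^ (n - 1) * x = x ^ n := by
        nth_rewrite 2 [← Real.rpow_one x]
        rw [← Real.rpow_add hx0]
        ring_nf
      calc μ₀ * (1 + lam) ^ (n - 1) * x ^ n
          = μ₀ * ((1 + lam) ^ (n - 1) * x ^ (n - 1)) * x := by rw [← h6]; ring
        _ ≤ μ₀ * (1 + (lam * x) ^ 2) ^ ((n - 1) / 2) * x := by
            apply mul_le_mul_of_nonneg_right _ (le_of_lt hx0)
            exact mul_le_mul_of_nonneg_left h3 (le_of_lt hμ₀)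
    have hlow : Filter.Tendsto (fun x : ℝ => μ₀ * (1 + lam) ^ (n - 1) * x ^ n)
        Filter.atTop Filter.atTop := by
      apply Filter.Tendsto.const_mul_atTop
      · positivity
      · exact tendsto_rpow_atTop hn0
    apply Filter.tendsto_atTop_mono' _ _ hlow
    filter_upwards [Filter.eventually_ge_atTop (1:ℝ)] with x hx using hbound x hx
  -- tendsto atBot
  have hodd : ∀ x : ℝ, f (-x) = -f x := by
    intro x
    show μ₀ * (1 + (lam * -x) ^ 2) ^ ((n - 1) / 2) * (-x)
        = -(μ₀ * (1 + (lam * x) ^ 2) ^ ((n - 1) / 2) * x)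
    have h : (lam * -x) ^ 2 = (lam * x) ^ 2 := by ring
    rw [h]; ring
  have hbot : Filter.Tendsto f Filter.atBot Filter.atBot := by
    have h1 : Filter.Tendsto (fun x : ℝ => f (-x)) Filter.atBot Filter.atTop :=
      htop.comp Filter.tendsto_neg_atBot_atTop
    have h2 : Filter.Tendsto (fun x : ℝ => -f x) Filter.atBot Filter.atTop := by
      apply h1.congr; intro x; rw [hodd]
    exact Filter.tendsto_neg_atTop_iff.mp h2
  exact ⟨hcont, hmono, htop, hbot,
    hmono.injective, hcont.surjective htop hbot⟩
end
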